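/- Let □ = (1/2)(dA∧dB + dG∧dA + dB∧d(G−A) + 2 d(A+B)∧dC + 2 d(G−A+B)∧dD + d(G−A+B)∧dE + dE∧d(A+B) + d(A+B−E)∧d(G−A+B−E) + 2 d(G+2B−2E)∧dF) be a 2-form in the exterior algebra generated by the seven 1-forms dA, dB, dC, dD, dE, dF, dG. Then □∧□∧□ = ±24 dA∧dB∧dC∧dD∧dE∧dF + dG∧μ for some 5-form μ; in particular, the coefficient of dA∧dB∧dC∧dD∧dE∧dF in □³ modulo multiples of dG has absolute value 24. -/

import Mathlib

/-!
Modulo `dG` the form is `ω = dA∧d(2B+C-D-2E) + dB∧d(C+D+2F) + dE∧d(-2F)`, and `□ = ω + dG∧β` for a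
1-form `β`. Two-forms commute, so `□³ ≡ ω³` modulo the left ideal generated by `dG`. The three
summands of `ω` are decomposable, hence commute and square to zero, so `ω³` is `3!` times their
product, and that product is `4 dA∧dB∧dC∧dD∧dE∧dF`.
-/

/-- Generators dA, dB, dC, dD, dE, dF, dG of the exterior algebra on 7 letters. -/
noncomputable def d7 (i : Fin 7) : ExteriorAlgebra ℝ (Fin 7 → ℝ) :=
  ExteriorAlgebra.ι ℝ (Pi.single i (1 : ℝ))

noncomputable def dA := d7 0
noncomputable def dB := d7 1
noncomputable def dC := d7 2
noncomputable def dD := d7 3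
noncomputable def dE := d7 4
noncomputable def dF := d7 5
noncomputable def dG := d7 6

noncomputable def box : ExteriorAlgebra ℝ (Fin 7 → ℝ) :=
  ((2 : ℝ)⁻¹) • (dA * dB + dG * dA + dB * (dG - dA)
    + (2 : ℝ) • ((dA + dB) * dC)
    + (2 : ℝ) • ((dG - dA + dB) * dD)
    + (dG - dA + dB) * dE
    + dE * (dA + dB)
    + (dA + dB - dE) * (dG - dA + dB - dE)
    + (2 : ℝ) • ((dG + (2 : ℝ) • dB - (2 : ℝ) • dE) * dF))

theorem Commute.exists_add_pow_eq_pow_add_mul {A : Type*} [Semiring A] {x y : A}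
    (h : Commute x y) (n : ℕ) : ∃ z, (x + y) ^ n = x ^ n + y * z := by
  induction n with
  | zero => exact ⟨0, by simp⟩
  | succ n ih =>
    obtain ⟨z, hz⟩ := ih
    refine ⟨x ^ n + x * z + y * z, ?_⟩
    rw [pow_succ', hz, pow_succ', add_mul, mul_add, mul_add, ← mul_assoc x y z, h.eq, mul_assoc]
    simp only [mul_add]
    abel

theorem Commute.add_pow_succ_of_mul_self_eq_zero {A : Type*} [Semiring A] {a b : A}
    (h : Commute a b) (hb : b * b = 0) (n : ℕ) :
    (a + b) ^ (n + 1) = a ^ (n + 1) + (n + 1) • (a ^ n * b) := by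
  induction n with
  | zero => simp
  | succ n ih =>
    have hba : a ^ n * b * a = a ^ (n + 1) * b := by rw [mul_assoc, ← h.eq, ← mul_assoc, pow_succ]
    have hbb : a ^ n * b * b = 0 := by rw [mul_assoc, hb, mul_zero]
    rw [pow_succ, ih, mul_add, add_mul, add_mul, smul_mul_assoc, smul_mul_assoc, hba, hbb, ← pow_succ]
    module

theorem add_add_pow_three_of_mul_self_eq_zero {A : Type*} [Semiring A] {p q r : A}
    (hpq : Commute p q) (hpr : Commute p r) (hqr : Commute q r)
    (hp : p * p = 0) (hq : q * q = 0) (hr : r * r = 0) :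
    (p + q + r) ^ 3 = 6 • (p * q * r) := by
  have hp2 : p ^ 2 = 0 := by rw [sq, hp]
  have hpq2 : (p + q) ^ 2 = 2 • (p * q) := by
    rw [hpq.add_pow_succ_of_mul_self_eq_zero hq, hp2, pow_one, zero_add]
  have hpq3 : (p + q) ^ 3 = 0 := by
    rw [hpq.add_pow_succ_of_mul_self_eq_zero hq, hp2, zero_mul, smul_zero, add_zero]
    exact pow_eq_zero_of_le (by norm_num) hp2
  rw [(hpr.add_left hqr).add_pow_succ_of_mul_self_eq_zero hr, hpq3, hpq2, zero_add, smul_mul_assoc,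
    smul_smul]
  norm_num

namespace ExteriorAlgebra

variable {R M : Type*} [CommRing R] [AddCommGroup M] [Module R M]

theorem ι_mul_ι_anticomm (x y : M) : ι R x * ι R y = -(ι R y * ι R x) :=
  eq_neg_of_add_eq_zero_left (ι_add_mul_swap x y)

theorem commute_ι_ι_mul_ι (x y z : M) : Commute (ι R x) (ι R y * ι R z) := by
  rw [Commute, SemiconjBy, ← mul_assoc, ι_mul_ι_anticomm x y, neg_mul, mul_assoc,
    ι_mul_ι_anticomm x z, mul_neg, neg_neg, mul_assoc]

theorem commute_ι_mul_ι (w x y z : M) : Commute (ι R w * ι R x) (ι R y * ι R z) :=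
  (commute_ι_ι_mul_ι w y z).mul_left (commute_ι_ι_mul_ι x y z)

theorem ι_mul_ι_mul_self (x y : M) : ι R x * ι R y * (ι R x * ι R y) = 0 := by
  rw [mul_assoc, (commute_ι_ι_mul_ι y x y).eq, ← mul_assoc, ← mul_assoc, ι_sq_zero, zero_mul,
    zero_mul]

end ExteriorAlgebra

open ExteriorAlgebra

-- Rewriting rules that sort products of generators by index: with them `simp` followed by
-- `module` decides identities between explicit forms.

theorem d7_mul_self (i : Fin 7) : d7 i * d7 i = 0 := ι_sq_zero _

theorem d7_mul_d7_mul_self (i : Fin 7) (x : ExteriorAlgebra ℝ (Fin 7 → ℝ)) :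
    d7 i * (d7 i * x) = 0 := by
  rw [← mul_assoc, d7_mul_self, zero_mul]

theorem d7_mul_d7_of_lt {i j : Fin 7} (_ : j < i) : d7 i * d7 j = -(d7 j * d7 i) :=
  ι_mul_ι_anticomm _ _

theorem d7_mul_d7_mul_of_lt {i j : Fin 7} (h : j < i) (x : ExteriorAlgebra ℝ (Fin 7 → ℝ)) :
    d7 i * (d7 j * x) = -(d7 j * (d7 i * x)) := by
  rw [← mul_assoc, d7_mul_d7_of_lt h, neg_mul, mul_assoc]

theorem ι_eq_sum_smul_d7 (v : Fin 7 → ℝ) : ι ℝ v = ∑ i, v i • d7 i := by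
  conv_lhs => rw [← (Pi.basisFun ℝ (Fin 7)).sum_repr v]
  simp only [map_sum, map_smul, Pi.basisFun_apply, Pi.basisFun_repr, d7]

-- `ι ℝ v` is the form written `d(v₀A + v₁B + ⋯ + v₆G)` in the statement.
noncomputable def boxModG : ExteriorAlgebra ℝ (Fin 7 → ℝ) :=
  ι ℝ ![1, 0, 0, 0, 0, 0, 0] * ι ℝ ![0, 2, 1, -1, -2, 0, 0]
    + ι ℝ ![0, 1, 0, 0, 0, 0, 0] * ι ℝ ![0, 0, 1, 1, 0, 2, 0]
    + ι ℝ ![0, 0, 0, 0, 1, 0, 0] * ι ℝ ![0, 0, 0, 0, 0, -2, 0]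

noncomputable def boxCoeffG : ExteriorAlgebra ℝ (Fin 7 → ℝ) :=
  ι ℝ ![0, -1, 0, 1, 1, 1, 0]

theorem box_eq_boxModG_add : box = boxModG + dG * boxCoeffG := by
  simp only [box, boxModG, boxCoeffG, dA, dB, dC, dD, dE, dF, dG, ι_eq_sum_smul_d7,
    Fin.sum_univ_seven]
  simp (disch := decide) only [Matrix.cons_val, zero_smul, one_smul, add_zero, zero_add,
    mul_add, add_mul, sub_mul, mul_sub, smul_add, smul_sub, smul_smul, mul_smul_comm,
    smul_mul_assoc, d7_mul_self, d7_mul_d7_of_lt, smul_neg]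
  module

theorem commute_boxModG_dG_mul_boxCoeffG : Commute boxModG (dG * boxCoeffG) :=
  ((commute_ι_mul_ι _ _ _ _).add_left (commute_ι_mul_ι _ _ _ _)).add_left (commute_ι_mul_ι _ _ _ _)

theorem boxModG_pow_three : boxModG ^ 3 = (24 : ℝ) • (dA * dB * dC * dD * dE * dF) := by
  rw [boxModG, add_add_pow_three_of_mul_self_eq_zero (commute_ι_mul_ι _ _ _ _)
    (commute_ι_mul_ι _ _ _ _) (commute_ι_mul_ι _ _ _ _) (ι_mul_ι_mul_self _ _)
    (ι_mul_ι_mul_self _ _) (ι_mul_ι_mul_self _ _)]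
  simp only [dA, dB, dC, dD, dE, dF, ι_eq_sum_smul_d7, Fin.sum_univ_seven]
  simp (disch := decide) only [Matrix.cons_val, zero_smul, one_smul, add_zero, zero_add,
    mul_add, add_mul, smul_add, smul_smul, mul_smul_comm, smul_mul_assoc, d7_mul_self,
    d7_mul_d7_mul_self, d7_mul_d7_of_lt, d7_mul_d7_mul_of_lt, mul_neg, neg_mul, smul_neg,
    mul_zero, zero_mul, neg_neg, mul_assoc]
  module

theorem stmt10 :
    ∃ μ : ExteriorAlgebra ℝ (Fin 7 → ℝ),
      box ^ 3 = (24 : ℝ) • (dA * dB * dC * dD * dE * dF) + dG * μ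
      ∨ box ^ 3 = -((24 : ℝ) • (dA * dB * dC * dD * dE * dF)) + dG * μ := by
  obtain ⟨z, hz⟩ := commute_boxModG_dG_mul_boxCoeffG.exists_add_pow_eq_pow_add_mul 3
  refine ⟨boxCoeffG * z, Or.inl ?_⟩
  rw [box_eq_boxModG_add, hz, boxModG_pow_three, mul_assoc dG]
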